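/- Let H₁, …, H_N be d×d complex Hermitian matrices, let θ ∈ ℝ^N be a fixed parameter vector, let ψ₀ ∈ ℂ^d be a unit vector, and for ε ∈ ℝ^N define the noisy variational circuit state ψ_θ(ε) = exp(−iθ₁(1+ε₁)H₁)···exp(−iθ_N(1+ε_N)H_N)·ψ₀ (ordered matrix product applied to ψ₀). Then Σ_{i=1}^N |θ_i|·‖H_i‖₂ is a Lipschitz bound of ε ↦ ψ_θ(ε) with respect to the ∞-norm, i.e. for all ε, ε′ ∈ ℝ^N: ‖ψ_θ(ε) − ψ_θ(ε′)‖₂ ≤ (Σ_{i=1}^N |θ_i|·‖H_i‖₂)·‖ε − ε′‖_∞. -/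

import Mathlib

set_option autoImplicit false

open scoped Matrix

/-- The operator norm (induced 2-norm, i.e. maximum singular value) of a complex matrix. -/
noncomputable def opNorm {m n : Type*} [Fintype m] [Fintype n] [DecidableEq n]
    (A : Matrix m n ℂ) : ℝ :=
  ‖LinearMap.toContinuousLinearMap (Matrix.toEuclideanLin A)‖

/-- The noisy variational circuit state
`ψ_θ(ε) = exp(−iθ₁(1+ε₁)H₁) ⋯ exp(−iθ_N(1+ε_N)H_N) ψ₀`
(ordered matrix product applied to `ψ₀`). -/
noncomputable def vqaState {d N : ℕ} (H : Fin N → Matrix (Fin d) (Fin d) ℂ)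
    (θ : Fin N → ℝ) (ψ₀ : EuclideanSpace ℂ (Fin d)) (ε : Fin N → ℝ) :
    EuclideanSpace ℂ (Fin d) :=
  Matrix.toEuclideanLin
    (List.ofFn fun i =>
      NormedSpace.exp ((-Complex.I * (θ i : ℂ) * (1 + (ε i : ℂ))) • H i)).prod ψ₀

/-! Each gate is `exp (s • x)` with `x = -i H` skew-adjoint, so every `exp (s • x)` is unitary and
`s ↦ exp (s • x)` has derivative `x * exp (s • x)` of norm `‖x‖`: the gate is `‖H‖`-Lipschitz in
`s = θ (1 + ε)`. Since multiplication by a unitary preserves the C⋆-norm, telescoping bounds the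
difference of two products of unitaries by the sum of the differences of their factors, and
applying the product to the unit vector `ψ₀` does not increase the norm. -/

open NormedSpace

section

variable {A : Type*} [NormedRing A] [StarRing A] [CStarRing A]

theorem norm_list_prod_sub_list_prod_le_of_mem_unitary {N : ℕ} {f g : Fin N → A}
    (hf : ∀ i, f i ∈ unitary A) (hg : ∀ i, g i ∈ unitary A) :
    ‖(List.ofFn f).prod - (List.ofFn g).prod‖ ≤ ∑ i, ‖f i - g i‖ := by
  induction N with
  | zero => simp
  | succ N ih =>
    rw [List.ofFn_succ, List.ofFn_succ, List.prod_cons, List.prod_cons]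
    set P := (List.ofFn fun i => f i.succ).prod
    set Q := (List.ofFn fun i => g i.succ).prod
    have hQ : Q ∈ unitary A := list_prod_mem (by simpa using fun i : Fin N => hg i.succ)
    calc ‖f 0 * P - g 0 * Q‖ = ‖f 0 * (P - Q) + (f 0 - g 0) * Q‖ := by noncomm_ring
      _ ≤ ‖P - Q‖ + ‖f 0 - g 0‖ := by
        grw [norm_add_le, CStarRing.norm_mem_unitary_mul _ (hf 0),
          CStarRing.norm_mul_mem_unitary _ hQ]
      _ ≤ ∑ i : Fin N, ‖f i.succ - g i.succ‖ + ‖f 0 - g 0‖ := by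
        grw [ih (fun i => hf i.succ) (fun i => hg i.succ)]
      _ = ∑ i, ‖f i - g i‖ := by rw [Fin.sum_univ_succ, add_comm]

end

section

variable {A : Type*} [CStarAlgebra A]

theorem exp_real_smul_mem_unitary {x : A} (hx : x ∈ skewAdjoint A) (u : ℝ) :
    exp (u • x) ∈ unitary A :=
  let +nondep : NormedAlgebra ℚ A := .restrictScalars ℚ ℂ A
  exp_mem_unitary_of_mem_skewAdjoint (skewAdjoint.smul_mem u hx)

theorem norm_exp_real_smul_sub_le {x : A} (hx : x ∈ skewAdjoint A) (s t : ℝ) :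
    ‖exp (s • x) - exp (t • x)‖ ≤ |s - t| * ‖x‖ := by
  let +nondep : NormedAlgebra ℚ A := .restrictScalars ℚ ℂ A
  have hderiv (u : ℝ) :
      HasDerivWithinAt (fun v : ℝ => exp (v • x)) (x * exp (u • x)) .univ u :=
    (hasDerivAt_exp_smul_const' x u).hasDerivWithinAt
  have hbound (u : ℝ) : ‖x * exp (u • x)‖ ≤ ‖x‖ :=
    (CStarRing.norm_mul_mem_unitary x (exp_real_smul_mem_unitary hx u)).le
  simpa [Real.norm_eq_abs, mul_comm] using
    convex_univ.norm_image_sub_le_of_norm_hasDerivWithin_le (fun u _ => hderiv u)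
      (fun u _ => hbound u) (Set.mem_univ t) (Set.mem_univ s)

theorem norm_list_prod_exp_sub_le {N : ℕ} {x : Fin N → A} (hx : ∀ i, x i ∈ skewAdjoint A)
    (s t : Fin N → ℝ) :
    ‖(List.ofFn fun i => exp (s i • x i)).prod - (List.ofFn fun i => exp (t i • x i)).prod‖ ≤
      ∑ i, |s i - t i| * ‖x i‖ :=
  (norm_list_prod_sub_list_prod_le_of_mem_unitary (fun i => exp_real_smul_mem_unitary (hx i) _)
    (fun i => exp_real_smul_mem_unitary (hx i) _)).trans
    (Finset.sum_le_sum fun i _ => norm_exp_real_smul_sub_le (hx i) _ _)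

end

section

open scoped Matrix.Norms.L2Operator

variable {n : Type*} [Fintype n] [DecidableEq n]

theorem opNorm_eq_l2_opNorm (M : Matrix n n ℂ) : opNorm M = ‖M‖ := rfl

theorem Matrix.norm_toEuclideanLin_apply_le (M : Matrix n n ℂ) (ψ : EuclideanSpace ℂ n) :
    ‖Matrix.toEuclideanLin M ψ‖ ≤ ‖M‖ * ‖ψ‖ :=
  (Matrix.toEuclideanCLM (𝕜 := ℂ) M).le_opNorm ψ

theorem vqaState_eq {d N : ℕ} (H : Fin N → Matrix (Fin d) (Fin d) ℂ) (θ : Fin N → ℝ)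
    (ψ₀ : EuclideanSpace ℂ (Fin d)) (e : Fin N → ℝ) :
    vqaState H θ ψ₀ e = Matrix.toEuclideanLin
      (List.ofFn fun i => exp ((θ i * (1 + e i)) • (-Complex.I • H i))).prod ψ₀ := by
  refine congrArg (fun g => Matrix.toEuclideanLin (List.ofFn g).prod ψ₀) (funext fun i => ?_)
  rw [← Complex.coe_smul, smul_smul]
  push_cast
  ring_nf

end

/-- Section VII of the paper: for a parametrized circuit with gates
`exp(−iθᵢHᵢ)` affected by coherent control errors `εᵢ`, the quantity `Σᵢ |θᵢ|·‖Hᵢ‖₂` is a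
Lipschitz bound of `ε ↦ ψ_θ(ε)` w.r.t. the ∞-norm (the default norm on `Fin N → ℝ`). -/
theorem vqa_lipschitz_bound {d N : ℕ} (H : Fin N → Matrix (Fin d) (Fin d) ℂ)
    (hH : ∀ i, (H i).IsHermitian) (θ : Fin N → ℝ)
    (ψ₀ : EuclideanSpace ℂ (Fin d)) (hψ₀ : ‖ψ₀‖ = 1) (ε ε' : Fin N → ℝ) :
    ‖vqaState H θ ψ₀ ε - vqaState H θ ψ₀ ε'‖ ≤
      (∑ i, |θ i| * opNorm (H i)) * ‖ε - ε'‖ := by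
  open scoped Matrix.Norms.L2Operator in
  · have hskew (i : Fin N) : -Complex.I • H i ∈ skewAdjoint (Matrix (Fin d) (Fin d) ℂ) :=
      (hH i).isSelfAdjoint.smul_mem_skewAdjoint (neg_mem Complex.I_mem_skewAdjoint)
    have hgate (i : Fin N) : |θ i * (1 + ε i) - θ i * (1 + ε' i)| * ‖-Complex.I • H i‖ ≤
        |θ i| * opNorm (H i) * ‖ε - ε'‖ := by
      rw [norm_smul, norm_neg, Complex.norm_I, one_mul, ← mul_sub_left_distrib,
        add_sub_add_left_eq_sub, abs_mul, mul_right_comm, opNorm_eq_l2_opNorm]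
      gcongr
      simpa [Real.norm_eq_abs] using norm_le_pi_norm (ε - ε') i
    calc ‖vqaState H θ ψ₀ ε - vqaState H θ ψ₀ ε'‖
        = ‖Matrix.toEuclideanLin
            ((List.ofFn fun i => exp ((θ i * (1 + ε i)) • (-Complex.I • H i))).prod -
              (List.ofFn fun i => exp ((θ i * (1 + ε' i)) • (-Complex.I • H i))).prod) ψ₀‖ := by
          rw [vqaState_eq, vqaState_eq, map_sub, LinearMap.sub_apply]
      _ ≤ ∑ i, |θ i * (1 + ε i) - θ i * (1 + ε' i)| * ‖-Complex.I • H i‖ := by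
          grw [Matrix.norm_toEuclideanLin_apply_le, hψ₀, mul_one, norm_list_prod_exp_sub_le hskew]
      _ ≤ ∑ i, |θ i| * opNorm (H i) * ‖ε - ε'‖ := Finset.sum_le_sum fun i _ => hgate i
      _ = (∑ i, |θ i| * opNorm (H i)) * ‖ε - ε'‖ := by rw [Finset.sum_mul]
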